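/- For every function f : (Fin m → Bool) → Bool and every natural number n, the function matrix M_f satisfies Z(1,n) · M_f = M_f^{⊗n} · σ_{m,n} · Z(1,n)^{⊗m}; that is, function maps (such as XOR and AND) satisfy the bialgebra law with the copy spider, sending computational basis states to computational basis states (the classical interpretation of the bialgebra rules given in Section 5). -/
import Mathlib


/-- An `(m,n)`-qubit map: a complex matrix with rows indexed by output
bit strings of length `n` and columns indexed by input bit strings of length `m`. -/
abbrev QMap (m n : ℕ) : Type := Matrix (Fin n → Bool) (Fin m → Bool) ℂ

/-- Canonical identification of a pair of bit strings with a single bit string. -/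
def bitEquiv (a b : ℕ) : ((Fin a → Bool) × (Fin b → Bool)) ≃ (Fin (a + b) → Bool) :=
  (Equiv.sumArrowEquivProdArrow (Fin a) (Fin b) Bool).symm.trans
    (Equiv.arrowCongr finSumFinEquiv (Equiv.refl Bool))

/-- Kronecker (tensor) product of qubit maps, under the canonical identification. -/
def tens {m n m' n' : ℕ} (A : QMap m n) (B : QMap m' n') : QMap (m + m') (n + n') :=
  Matrix.reindex (bitEquiv n n') (bitEquiv m m') (Matrix.kroneckerMap (· * ·) A B)

/-- Transport a qubit map along equalities of the numbers of inputs and outputs. -/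
def castQ {m m' n n' : ℕ} (hm : m = m') (hn : n = n') (A : QMap m n) : QMap m' n' :=
  Matrix.reindex (Equiv.arrowCongr (finCongr hn) (Equiv.refl Bool))
    (Equiv.arrowCongr (finCongr hm) (Equiv.refl Bool)) A

/-- The Z-spider `Z(m,n)`: entry 1 iff all `m+n` bits are equal (all 0 or all 1). -/
def Zsp (m n : ℕ) : QMap m n := fun j i =>
  if ((∀ k, i k = false) ∧ (∀ k, j k = false)) ∨ ((∀ k, i k = true) ∧ (∀ k, j k = true))
  then 1 else 0

/-- The X-spider `X(m,n)`: entry 1 iff the sum mod 2 of all `m+n` bits is 0. -/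
def Xsp (m n : ℕ) : QMap m n := fun j i =>
  if ((∑ k, (if i k then (1 : ZMod 2) else 0)) + ∑ k, (if j k then (1 : ZMod 2) else 0)) = 0
  then 1 else 0

/-- The (phase-free) H-box `H(m,n)`: entry −1 iff all `m+n` bits are 1, else 1. -/
def Hbox (m n : ℕ) : QMap m n := fun j i =>
  if (∀ k, i k = true) ∧ (∀ k, j k = true) then -1 else 1

/-- The Hadamard gate `(1/√2)·[[1,1],[1,−1]]`. -/
noncomputable def Had : QMap 1 1 := fun j i =>
  (Real.sqrt 2 : ℂ)⁻¹ * (if i 0 = true ∧ j 0 = true then -1 else 1)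

/-- The NOT gate `[[0,1],[1,0]]`. -/
def Xg : QMap 1 1 := fun j i => if j 0 = i 0 then 0 else 1

/-- The Z gate `diag(1,−1)`. -/
def Zg : QMap 1 1 := fun j i => if j 0 = i 0 then (if i 0 = true then -1 else 1) else 0

/-- The triangle `[[1,1],[0,1]]` (row `j`, column `i`; the only zero entry is at `j=1, i=0`). -/
def Tri : QMap 1 1 := fun j i => if j 0 = true ∧ i 0 = false then 0 else 1

/-- The AND gate: `|x,y⟩ ↦ |x ∧ y⟩`. -/
def ANDg : QMap 2 1 := fun j i => if j 0 = (i 0 && i 1) then 1 else 0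

/-- The swap of two qubits. -/
def swapQ : QMap 2 2 := fun j i => if j 0 = i 1 ∧ j 1 = i 0 then 1 else 0

/-- The cup `|00⟩ + |11⟩`. -/
def cupQ : QMap 0 2 := fun j _ => if j 0 = j 1 then 1 else 0

/-- The cap `⟨00| + ⟨11|`. -/
def capQ : QMap 2 0 := fun _ i => if i 0 = i 1 then 1 else 0

/-- The scalar `1/√2` as a `(0,0)`-map. -/
noncomputable def starQ : QMap 0 0 := fun _ _ => (Real.sqrt 2 : ℂ)⁻¹

/-- `k`-fold tensor power of a qubit map. -/
def tpow {a b : ℕ} (A : QMap a b) : (k : ℕ) → QMap (a * k) (b * k)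
  | 0 => (1 : QMap 0 0)
  | k + 1 => tens (tpow A k) A

/-- The wire in block `s` (of `b` blocks), at position `t` within the block (of size `a`). -/
def wp {a b : ℕ} (s : Fin b) (t : Fin a) : Fin (a * b) :=
  ⟨a * s.val + t.val, by
    have ht := t.isLt
    have hs := s.isLt
    have h1 : a * s.val + t.val < a * (s.val + 1) := by rw [Nat.mul_succ]; omega
    exact lt_of_lt_of_le h1 (Nat.mul_le_mul (le_refl a) hs)⟩

/-- The permutation `σ_{m,n}` regrouping `m` blocks of `n` wires into `n` blocks of `m` wires:
it reindexes bit strings `g : Fin m × Fin n → Bool` to `(s,t) ↦ g(t,s)`. -/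
def sigmaQ (m n : ℕ) : QMap (n * m) (m * n) := fun j i =>
  if ∀ (s : Fin m) (t : Fin n), j (wp t s) = i (wp s t) then 1 else 0

/-- The function matrix `M_f` of a Boolean function `f`. -/
def funMat {m : ℕ} (f : (Fin m → Bool) → Bool) : QMap m 1 := fun j i =>
  if j 0 = f i then 1 else 0

lemma wp_val {a b : ℕ} (s : Fin b) (t : Fin a) : (wp s t).val = a * s.val + t.val := rfl

lemma wp_surj {a b : ℕ} (p : Fin (a * b)) : ∃ (s : Fin b) (t : Fin a), p = wp s t := by
  have ha : 0 < a := by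
    rcases Nat.eq_zero_or_pos a with h | h
    · exact absurd p.isLt (by subst h; simp)
    · exact h
  refine ⟨⟨p.val / a, Nat.div_lt_of_lt_mul p.isLt⟩, ⟨p.val % a, Nat.mod_lt _ ha⟩, ?_⟩
  apply Fin.ext
  show p.val = a * (p.val / a) + p.val % a
  exact (Nat.div_add_mod p.val a).symm

lemma Zsp_one_apply (n : ℕ) (j : Fin n → Bool) (x : Fin 1 → Bool) :
    Zsp 1 n j x = if ∀ t, j t = x 0 then 1 else 0 := by
  unfold Zsp
  simp only [Fin.forall_fin_one]
  cases hx : x 0 <;> simp [hx]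

lemma tens_apply {m n m' n' : ℕ} (A : QMap m n) (B : QMap m' n')
    (j : Fin (n + n') → Bool) (i : Fin (m + m') → Bool) :
    tens A B j i =
      A (fun u => j (Fin.castAdd n' u)) (fun u => i (Fin.castAdd m' u)) *
      B (fun u => j (Fin.natAdd n u)) (fun u => i (Fin.natAdd m u)) := rfl

lemma castQ_apply {m m' n n' : ℕ} (hm : m = m') (hn : n = n') (A : QMap m n)
    (r : Fin n' → Bool) (c : Fin m' → Bool) :
    castQ hm hn A r c = A (fun u => r (finCongr hn u)) (fun u => c (finCongr hm u)) := rfl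

lemma tpow_apply {a b : ℕ} (A : QMap a b) (k : ℕ) (j : Fin (b * k) → Bool)
    (i : Fin (a * k) → Bool) :
    tpow A k j i = ∏ s : Fin k, A (fun u => j (wp s u)) (fun u => i (wp s u)) := by
  induction k with
  | zero =>
    have h : j = i := funext fun u => absurd u.isLt (by omega)
    rw [h]
    show (1 : QMap 0 0) i i = _
    simp [Matrix.one_apply_eq]
  | succ k ih =>
    show tens (tpow A k) A j i = _
    rw [tens_apply, ih, Fin.prod_univ_castSucc]
    refine congrArg₂ (· * ·) (Finset.prod_congr rfl fun s _ => ?_) ?_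
    · exact congrArg₂ A (funext fun u => congrArg j (Fin.ext (by simp [wp])))
        (funext fun u => congrArg i (Fin.ext (by simp [wp])))
    · exact congrArg₂ A (funext fun u => congrArg j (Fin.ext (by simp [wp])))
        (funext fun u => congrArg i (Fin.ext (by simp [wp])))

/-- every function map satisfies the bialgebra law with the copy spider. -/
theorem zh_function_map_bialgebra (m n : ℕ) (f : (Fin m → Bool) → Bool) :
    Zsp 1 n * funMat f =
      castQ rfl (one_mul n) (tpow (funMat f) n) * sigmaQ m n *
        castQ (one_mul m) rfl (tpow (Zsp 1 n) m) := by
  funext j i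
  have hL : (Zsp 1 n * funMat f) j i = if ∀ t, j t = f i then 1 else 0 := by
    rw [Matrix.mul_apply]
    rw [Finset.sum_eq_single (fun _ : Fin 1 => f i)]
    · rw [Zsp_one_apply]; simp [funMat]
    · intro x _ hx
      have hx0 : x 0 ≠ f i := fun h => hx (funext fun u => by
        rw [Subsingleton.elim u (0 : Fin 1), h])
      simp [funMat, hx0]
    · intro h; exact absurd (Finset.mem_univ _) h
  have mpos : ∀ _p : Fin (m * n), 0 < m := fun p => by
    rcases Nat.eq_zero_or_pos m with h | h
    · exact absurd p.isLt (by subst h; simp)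
    · exact h
  set g₀ : Fin (n * m) → Bool :=
    fun p => i ⟨p.val / n, Nat.div_lt_of_lt_mul p.isLt⟩ with hg₀
  set h₀ : Fin (m * n) → Bool :=
    fun p => i ⟨p.val % m, Nat.mod_lt _ (mpos p)⟩ with hh₀
  have kg : ∀ (s : Fin m) (t : Fin n), g₀ (wp s t) = i s := by
    intro s t
    apply congrArg i
    apply Fin.ext
    show (n * s.val + t.val) / n = s.val
    rw [Nat.mul_add_div t.pos, Nat.div_eq_of_lt t.isLt, Nat.add_zero]
  have kh : ∀ (t : Fin n) (s : Fin m), h₀ (wp t s) = i s := by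
    intro t s
    apply congrArg i
    apply Fin.ext
    show (m * t.val + s.val) % m = s.val
    rw [Nat.mul_add_mod, Nat.mod_eq_of_lt s.isLt]
  have hB : ∀ g : Fin (n * m) → Bool,
      castQ (one_mul m) rfl (tpow (Zsp 1 n) m) g i =
        if ∀ (s : Fin m) (t : Fin n), g (wp s t) = i s then 1 else 0 := by
    intro g
    rw [castQ_apply, tpow_apply]
    have step : ∀ s : Fin m,
        Zsp 1 n (fun u => g (finCongr rfl (wp s u)))
          (fun u => i (finCongr (one_mul m) (wp s u))) =
        if ∀ t : Fin n, g (wp s t) = i s then 1 else 0 := by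
      intro s
      rw [Zsp_one_apply]
      have e2 : i (finCongr (one_mul m) (wp s (0 : Fin 1))) = i s :=
        congrArg i (Fin.ext (by simp [wp]))
      simp only [finCongr_refl, Equiv.refl_apply, e2]
    rw [Finset.prod_congr rfl fun s _ => step s, Finset.prod_boole]
    simp
  have hA : ∀ h : Fin (m * n) → Bool,
      castQ rfl (one_mul n) (tpow (funMat f) n) j h =
        if ∀ t : Fin n, j t = f (fun s => h (wp t s)) then 1 else 0 := by
    intro h
    rw [castQ_apply, tpow_apply]
    have step : ∀ t : Fin n,
        funMat f (fun u => j (finCongr (one_mul n) (wp t u)))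
          (fun u => h (finCongr rfl (wp t u))) =
        if j t = f (fun s => h (wp t s)) then 1 else 0 := by
      intro t
      have e1 : j (finCongr (one_mul n) (wp t (0 : Fin 1))) = j t :=
        congrArg j (Fin.ext (by simp [wp]))
      show (if j (finCongr (one_mul n) (wp t (0 : Fin 1))) =
          f (fun u => h (finCongr rfl (wp t u))) then 1 else 0) = _
      simp only [finCongr_refl, Equiv.refl_apply, e1]
    rw [Finset.prod_congr rfl fun t _ => step t, Finset.prod_boole]
    simp
  have hR : (castQ rfl (one_mul n) (tpow (funMat f) n) * sigmaQ m n *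
        castQ (one_mul m) rfl (tpow (Zsp 1 n) m)) j i = if ∀ t, j t = f i then 1 else 0 := by
    rw [Matrix.mul_apply, Finset.sum_eq_single g₀]
    · rw [hB, if_pos kg, mul_one, Matrix.mul_apply, Finset.sum_eq_single h₀]
      · have hS1 : sigmaQ m n h₀ g₀ = 1 := by
          unfold sigmaQ
          rw [if_pos]
          intro s t
          rw [kh, kg]
        rw [hS1, mul_one, hA]
        have e : ∀ t : Fin n, (fun s => h₀ (wp t s)) = i := fun t => funext fun s => kh t s
        simp only [e]
      · intro h _ hne
        have hc : ¬ ∀ (s : Fin m) (t : Fin n), h (wp t s) = g₀ (wp s t) := by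
          intro hall
          apply hne
          funext p
          obtain ⟨sn, tm, rfl⟩ := wp_surj p
          rw [hall tm sn, kg tm sn, kh sn tm]
        unfold sigmaQ
        rw [if_neg hc, mul_zero]
      · intro h; exact absurd (Finset.mem_univ _) h
    · intro g _ hne
      have hc : ¬ ∀ (s : Fin m) (t : Fin n), g (wp s t) = i s := by
        intro hall
        apply hne
        funext p
        obtain ⟨s, t, rfl⟩ := wp_surj p
        rw [hall s t, kg]
      rw [hB, if_neg hc, mul_zero]
    · intro h; exact absurd (Finset.mem_univ _) h
  rw [hL, hR]
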